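/- arXiv:2305.19773 — 2 statements merged into one kernel-verified Lean document; each statement's English description precedes it below -/
import Mathlib

section
/- Let G and N be positive integers with G ≤ N, and let N_1, …, N_G be positive integers with N_1 + ⋯ + N_G = N. Then ∑_{g=1}^{G} 1/N_g = (G − 1) + 1/(N − G + 1) if and only if at most one of the N_g is greater than 1, i.e., if and only if (N_1, …, N_G) is a permutation of (1, …, 1, N − G + 1). -/
open Finset

/-- Over positive integers `N_1, …, N_G` summing to `N` (with `1 ≤ G ≤ N`), the sum of
reciprocals equals `(G - 1) + 1/(N - G + 1)` if and only if at most one of the `N_g`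
is greater than `1`. -/
theorem sum_inv_eq_iff_at_most_one_gt_one (G N : ℕ) (hG : 0 < G) (hN : 0 < N)
    (hGN : G ≤ N) (Ng : Fin G → ℕ) (hpos : ∀ g, 1 ≤ Ng g) (hsum : ∑ g, Ng g = N) :
    (∑ g, (1 : ℝ) / (Ng g : ℝ) = ((G : ℝ) - 1) + 1 / ((N : ℝ) - (G : ℝ) + 1))
      ↔ (∀ g₁ g₂ : Fin G, 1 < Ng g₁ → 1 < Ng g₂ → g₁ = g₂) := by
  have hNG1 : (0:ℝ) < (N : ℝ) - (G : ℝ) + 1 := by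
    have : (G:ℝ) ≤ (N:ℝ) := by exact_mod_cast hGN
    linarith
  constructor
  · intro heq g₁ g₂ h1 h2
    by_contra hne
    have hterm : ∀ g ∈ univ, (1:ℝ)/(Ng g : ℝ) ≤
        1 - (if g = g₁ then (1:ℝ)/2 else 0) - (if g = g₂ then (1:ℝ)/2 else 0) := by
      intro g _
      by_cases e1 : g = g₁
      · have e2 : ¬ g = g₂ := by
          intro h; exact hne (e1 ▸ h ▸ rfl)
        rw [e1] at e2 ⊢
        rw [if_pos rfl, if_neg e2]
        have h2' : (2:ℝ) ≤ (Ng g₁ : ℝ) := by exact_mod_cast h1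
        have := one_div_le_one_div_of_le (by norm_num : (0:ℝ) < 2) h2'
        linarith
      · by_cases e2 : g = g₂
        · rw [e2] at e1 ⊢
          rw [if_neg e1, if_pos rfl]
          have h2' : (2:ℝ) ≤ (Ng g₂ : ℝ) := by exact_mod_cast h2
          have := one_div_le_one_div_of_le (by norm_num : (0:ℝ) < 2) h2'
          linarith
        · rw [if_neg e1, if_neg e2]
          have h1' : (1:ℝ) ≤ (Ng g : ℝ) := by exact_mod_cast hpos g
          have := one_div_le_one_div_of_le (by norm_num : (0:ℝ) < 1) h1'
          linarith
    have hsumle : ∑ g, (1:ℝ)/(Ng g : ℝ) ≤ (G:ℝ) - 1 := by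
      calc ∑ g, (1:ℝ)/(Ng g : ℝ)
          ≤ ∑ g, (1 - (if g = g₁ then (1:ℝ)/2 else 0) - (if g = g₂ then (1:ℝ)/2 else 0)) :=
            Finset.sum_le_sum hterm
        _ = (G:ℝ) - 1 := by
            rw [Finset.sum_sub_distrib, Finset.sum_sub_distrib, Finset.sum_const,
              Finset.sum_ite_eq' univ g₁ (fun _ => (1:ℝ)/2),
              Finset.sum_ite_eq' univ g₂ (fun _ => (1:ℝ)/2)]
            simp [Fintype.card_fin]
            ring
    rw [heq] at hsumle
    have : (0:ℝ) < 1 / ((N : ℝ) - (G : ℝ) + 1) := by positivity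
    linarith
  · intro h
    by_cases hall : ∀ g, Ng g = 1
    · have hNG : G = N := by
        rw [← hsum]
        simp [hall]
      subst hNG
      have : ((G:ℝ) - (G:ℝ) + 1) = 1 := by ring
      rw [this]
      simp [hall]
    · push_neg at hall
      obtain ⟨g₀, hg₀⟩ := hall
      have hg₀' : 1 < Ng g₀ := lt_of_le_of_ne (hpos g₀) (Ne.symm hg₀)
      have hothers : ∀ g, g ≠ g₀ → Ng g = 1 := by
        intro g hg
        by_contra hgg
        exact hg (h g g₀ (lt_of_le_of_ne (hpos g) (Ne.symm hgg)) hg₀')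
      have hcast : (Ng g₀ : ℝ) = (N:ℝ) - (G:ℝ) + 1 := by
        have hnat : Ng g₀ + (G - 1) = N := by
          rw [← hsum, ← Finset.add_sum_erase _ _ (Finset.mem_univ g₀)]
          congr 1
          rw [Finset.sum_congr rfl (fun g hg => hothers g (Finset.ne_of_mem_erase hg))]
          simp [Finset.card_erase_of_mem, Fintype.card_fin]
        have : (Ng g₀ : ℝ) + ((G:ℝ) - 1) = (N:ℝ) := by
          have := congrArg (fun n : ℕ => (n : ℝ)) hnat
          push_cast [Nat.cast_sub hG] at this
          linarith [this]
        linarith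
      have hrw : ∀ g ∈ univ, (1:ℝ)/(Ng g : ℝ) =
          (if g = g₀ then 1/((N:ℝ) - (G:ℝ) + 1) - 1 else 0) + 1 := by
        intro g _
        by_cases e : g = g₀
        · simp [e, hcast]
        · simp [e, hothers g e]
      rw [Finset.sum_congr rfl hrw, Finset.sum_add_distrib, Finset.sum_const,
        Finset.sum_ite_eq' univ g₀]
      simp [Fintype.card_fin]
      ring
end

section
/- Let Γ denote the real Gamma function and define f(M) = (Γ(M + 1/2)/Γ(M))². Let N and C be positive integers with N ≤ C ≤ 2N − 1, set G = 2N − C, N_1 = ⋯ = N_{G−1} = 1 and N_G = C − N + 1. Then ∑_{g=1}^{G} N_g² + ∑_{g_1 ≠ g_2} f(N_{g_1}) f(N_{g_2}) = (C − N)² + C + (2N − C − 1)(2N − C − 2) Γ(3/2)⁴ + 2(2N − C − 1) ( Γ(C − N + 3/2) Γ(3/2) / Γ(C − N + 1) )², where the sum over g_1 ≠ g_2 ranges over all ordered pairs (g_1, g_2) with g_1 ≠ g_2. -/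
open Finset Real

/-!
All groups but the last have size one, so the summands take only two values: `1` and `f 1 = Γ(3/2)²`
for the `G - 1` singleton groups, `(C - N + 1)²` and `f (C - N + 1)` for the last one. The cross sum
`∑_{g₁ ≠ g₂} f(N_{g₁}) f(N_{g₂})` is `(∑ f)² - ∑ f²`, and the closed form follows by expanding.
-/

theorem Finset.sum_sum_erase_mul_eq_sq_sum_sub_sum_sq {ι R : Type*} [CommRing R] [DecidableEq ι]
    (s : Finset ι) (x : ι → R) :
    ∑ i ∈ s, ∑ j ∈ s.erase i, x i * x j = (∑ i ∈ s, x i) ^ 2 - ∑ i ∈ s, x i ^ 2 := by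
  calc ∑ i ∈ s, ∑ j ∈ s.erase i, x i * x j
      = ∑ i ∈ s, x i * ((∑ j ∈ s, x j) - x i) :=
        sum_congr rfl fun i hi => by rw [← mul_sum, sum_erase_eq_sub hi]
    _ = _ := by simp only [mul_sub, sum_sub_distrib, ← sum_mul, sq]

theorem Fin.sum_univ_eq_mul_add_last {R : Type*} [Semiring R] {n : ℕ} {a : R}
    (x : Fin (n + 1) → R) (hx : ∀ i : Fin n, x i.castSucc = a) :
    ∑ i, x i = n * a + x (Fin.last n) := by
  simp [Fin.sum_univ_castSucc, hx]

theorem pareto_frontier_general (N C : ℕ) (hN : 0 < N)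
    (hNC : N ≤ C) (hC2 : C ≤ 2 * N - 1)
    (f : ℝ → ℝ) (hf : ∀ M : ℝ, f M = (Real.Gamma (M + 1 / 2) / Real.Gamma M) ^ 2)
    (G : ℕ) (hG : G = 2 * N - C)
    (Ng : Fin G → ℕ) (hNg : ∀ g : Fin G, Ng g = if (g : ℕ) < G - 1 then 1 else C - N + 1) :
    ∑ g : Fin G, ((Ng g : ℝ)) ^ 2
      + ∑ g₁ : Fin G, ∑ g₂ ∈ univ.erase g₁, f (Ng g₁) * f (Ng g₂)
      = ((C : ℝ) - (N : ℝ)) ^ 2 + (C : ℝ)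
        + (2 * (N : ℝ) - (C : ℝ) - 1) * (2 * (N : ℝ) - (C : ℝ) - 2)
            * Real.Gamma (3 / 2) ^ 4
        + 2 * (2 * (N : ℝ) - (C : ℝ) - 1)
            * (Real.Gamma ((C : ℝ) - (N : ℝ) + 3 / 2) * Real.Gamma (3 / 2)
                / Real.Gamma ((C : ℝ) - (N : ℝ) + 1)) ^ 2 := by
  obtain ⟨n, rfl⟩ : ∃ n, G = n + 1 := ⟨G - 1, by omega⟩
  have hn : (n : ℝ) = 2 * N - C - 1 := by
    rw [eq_sub_iff_add_eq, ← Nat.cast_add_one, hG, Nat.cast_sub (by omega)]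
    push_cast
    ring
  have hsingle (i : Fin n) : (Ng i.castSucc : ℝ) = 1 := by simp [hNg]
  have hlast : (Ng (Fin.last n) : ℝ) = C - N + 1 := by simp [hNg, Nat.cast_sub hNC]
  have hf_one : f 1 = Gamma (3 / 2) ^ 2 := by norm_num [hf, Gamma_one]
  have hf_last : f (C - N + 1) = (Gamma (C - N + 3 / 2) / Gamma (C - N + 1)) ^ 2 := by
    rw [hf, show (C : ℝ) - N + 1 + 1 / 2 = C - N + 3 / 2 by ring]
  rw [sum_sum_erase_mul_eq_sq_sum_sub_sum_sq,
    Fin.sum_univ_eq_mul_add_last _ fun i => by rw [hsingle],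
    Fin.sum_univ_eq_mul_add_last _ fun i => by rw [hsingle],
    Fin.sum_univ_eq_mul_add_last _ fun i => by rw [hsingle], hlast, hf_one, hf_last, hn]
  ring

/-- Pareto frontier of the performance-complexity trade-off: exact expected received
signal power of the optimal `N`-element BD-RIS with circuit complexity `C`
(`N ≤ C ≤ 2N - 1`), having `G = 2N - C` groups with sizes
`N_1 = ⋯ = N_{G-1} = 1`, `N_G = C - N + 1`, where `f M = (Γ(M + 1/2)/Γ(M))²`. -/
theorem pareto_frontier (N C : ℕ) (hN : 0 < N) (hC : 0 < C)
    (hNC : N ≤ C) (hC2 : C ≤ 2 * N - 1)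
    (f : ℝ → ℝ) (hf : ∀ M : ℝ, f M = (Real.Gamma (M + 1 / 2) / Real.Gamma M) ^ 2)
    (G : ℕ) (hG : G = 2 * N - C)
    (Ng : Fin G → ℕ) (hNg : ∀ g : Fin G, Ng g = if (g : ℕ) < G - 1 then 1 else C - N + 1) :
    ∑ g : Fin G, ((Ng g : ℝ)) ^ 2
      + ∑ g₁ : Fin G, ∑ g₂ ∈ univ.erase g₁, f (Ng g₁) * f (Ng g₂)
      = ((C : ℝ) - (N : ℝ)) ^ 2 + (C : ℝ)
        + (2 * (N : ℝ) - (C : ℝ) - 1) * (2 * (N : ℝ) - (C : ℝ) - 2)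
            * Real.Gamma (3 / 2) ^ 4
        + 2 * (2 * (N : ℝ) - (C : ℝ) - 1)
            * (Real.Gamma ((C : ℝ) - (N : ℝ) + 3 / 2) * Real.Gamma (3 / 2)
                / Real.Gamma ((C : ℝ) - (N : ℝ) + 1)) ^ 2 :=
  pareto_frontier_general N C hN hNC hC2 f hf G hG Ng hNg
end
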